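/- arXiv:2605.23864 — 5 statements merged into one kernel-verified Lean document; each statement's English description precedes it below -/
import Mathlib

section
/- Let W be an N×N real matrix that is symmetric, has nonnegative entries, every row sum equal to 1, is positive semidefinite, and satisfies w_{ii} > 0 for all i; assume moreover that the graph on vertices {1,…,N} having an edge between distinct i and j whenever w_{ij} > 0 is connected. Then W₀ := W − (1/N)𝟙_N𝟙_Nᵀ is symmetric positive semidefinite and all of its eigenvalues lie in the interval [0,1); equivalently, the operator norm of W₀ is strictly less than 1. -/
/-!
Since `W𝟙 = 𝟙` and `𝟙ᵀW = 𝟙ᵀ`, the matrix `W₀ = W - 𝟙𝟙ᵀ/N` equals `PWP` for the symmetric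
projection `P = I - 𝟙𝟙ᵀ/N`, so it is positive semidefinite. An eigenvector `v` of `W₀` with
nonzero eigenvalue is orthogonal to `𝟙`, hence an eigenvector of `W` for the same eigenvalue.
For a doubly stochastic `W` one has `∑ᵢⱼ wᵢⱼ (vᵢ - vⱼ)² = 2 (vᵀv - vᵀWv)`; the left side vanishes
only if `v` is constant along every edge, i.e. (by connectivity) constant, which for `v ⟂ 𝟙`,
`v ≠ 0` is impossible. Thus `vᵀWv < vᵀv`, and the eigenvalue is `< 1`.
-/

open Matrix Finset

theorem SimpleGraph.Preconnected.eq_of_forall_adj {V α : Type*} {G : SimpleGraph V}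
    (hG : G.Preconnected) {f : V → α} (hf : ∀ i j, G.Adj i j → f i = f j) (i j : V) :
    f i = f j := by
  obtain ⟨w⟩ := hG i j
  induction w with
  | nil => rfl
  | cons hadj _ ih => exact (hf _ _ hadj).trans ih

theorem exists_apply_ne_of_sum_eq_zero {n : Type*} [Fintype n] {v : n → ℝ} (hv : v ≠ 0)
    (hsum : ∑ i, v i = 0) : ∃ i j, v i ≠ v j := by
  obtain ⟨i, hi⟩ := Function.ne_iff.1 hv
  by_contra! hconst
  have hcard : (Fintype.card n : ℝ) * v i = 0 := by
    simpa [Finset.card_univ, fun j => hconst j i] using hsum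
  have : Nonempty n := ⟨i⟩
  exact hi (by simpa [Fintype.card_ne_zero] using hcard)

namespace Matrix

variable {n : Type*} [Fintype n]

theorem exists_mulVec_eq_smul_of_mem_spectrum {K : Type*} [Field K] [DecidableEq n]
    {A : Matrix n n K} {μ : K} (hμ : μ ∈ spectrum K A) : ∃ v ≠ 0, A *ᵥ v = μ • v := by
  rw [← spectrum_toLin', ← Module.End.hasEigenvalue_iff_mem_spectrum] at hμ
  obtain ⟨v, hv, hv0⟩ := hμ.exists_hasEigenvector
  exact ⟨v, hv0, Module.End.mem_eigenspace_iff.1 hv⟩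

section DoublyStochastic

variable {R : Type*} [CommRing R] {A : Matrix n n R}

theorem mul_allOnes_of_sum_row_eq_one (h : ∀ i, ∑ j, A i j = 1) :
    A * of (fun _ _ : n => (1 : R)) = of fun _ _ => 1 := by
  ext i j
  simp [mul_apply, h]

theorem allOnes_mul_of_sum_col_eq_one (h : ∀ j, ∑ i, A i j = 1) :
    of (fun _ _ : n => (1 : R)) * A = of fun _ _ => 1 := by
  ext i j
  simp [mul_apply, h]

theorem allOnes_mul_allOnes :
    of (fun _ _ : n => (1 : R)) * of (fun _ _ : n => (1 : R)) =
      (Fintype.card n : R) • of fun _ _ => 1 := by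
  ext i j
  simp [mul_apply]

theorem sum_mul_sub_sq_eq (hrow : ∀ i, ∑ j, A i j = 1) (hcol : ∀ j, ∑ i, A i j = 1)
    (v : n → R) :
    ∑ i, ∑ j, A i j * (v i - v j) ^ 2 = 2 * (v ⬝ᵥ v - v ⬝ᵥ (A *ᵥ v)) := by
  have hleft : ∑ i, ∑ j, A i j * v i ^ 2 = v ⬝ᵥ v := by
    simp only [← Finset.sum_mul, hrow, one_mul, dotProduct, sq]
  have hright : ∑ i, ∑ j, A i j * v j ^ 2 = v ⬝ᵥ v := by
    rw [Finset.sum_comm]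
    simp only [← Finset.sum_mul, hcol, one_mul, dotProduct, sq]
  have hcross : ∑ i, ∑ j, A i j * v i * v j = v ⬝ᵥ (A *ᵥ v) := by
    simp only [dotProduct, mulVec, Finset.mul_sum]
    exact Finset.sum_congr rfl fun i _ => Finset.sum_congr rfl fun j _ => by ring
  calc ∑ i, ∑ j, A i j * (v i - v j) ^ 2
      = ∑ i, ∑ j, A i j * v i ^ 2 + ∑ i, ∑ j, A i j * v j ^ 2
          - 2 * ∑ i, ∑ j, A i j * v i * v j := by
        simp only [Finset.mul_sum, ← Finset.sum_add_distrib, ← Finset.sum_sub_distrib]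
        exact Finset.sum_congr rfl fun i _ => Finset.sum_congr rfl fun j _ => by ring
    _ = 2 * (v ⬝ᵥ v - v ⬝ᵥ (A *ᵥ v)) := by rw [hleft, hright, hcross]; ring

end DoublyStochastic

theorem PosSemidef.sub_inv_card_smul_allOnes [DecidableEq n] {A : Matrix n n ℝ}
    (hA : A.PosSemidef) (hc : (Fintype.card n : ℝ) ≠ 0)
    (hrow : ∀ i, ∑ j, A i j = 1) (hcol : ∀ j, ∑ i, A i j = 1) :
    (A - (Fintype.card n : ℝ)⁻¹ • of fun _ _ => 1).PosSemidef := by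
  set P : Matrix n n ℝ := 1 - (Fintype.card n : ℝ)⁻¹ • of fun _ _ => 1
  have hP : Pᴴ = P := by
    ext i j
    simp [P, one_apply, eq_comm]
  have hPAP : P * A * P = A - (Fintype.card n : ℝ)⁻¹ • of fun _ _ => 1 := by
    simp only [P, sub_mul, mul_sub, one_mul, mul_one, Matrix.smul_mul, Matrix.mul_smul,
      mul_allOnes_of_sum_row_eq_one hrow, allOnes_mul_of_sum_col_eq_one hcol,
      allOnes_mul_allOnes, smul_smul, inv_mul_cancel₀ hc]
    module
  simpa only [hP, hPAP] using hA.conjTranspose_mul_mul_same P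

section Connected

variable {A : Matrix n n ℝ} (hA : ∀ i j, 0 ≤ A i j)
  (hrow : ∀ i, ∑ j, A i j = 1) (hcol : ∀ j, ∑ i, A i j = 1)
  (hconn : (SimpleGraph.fromRel fun i j => 0 < A i j).Preconnected)
include hA hrow hcol hconn

theorem dotProduct_mulVec_lt_dotProduct_self {v : n → ℝ} {i j : n} (hv : v i ≠ v j) :
    v ⬝ᵥ (A *ᵥ v) < v ⬝ᵥ v := by
  have hterm : ∀ i j, 0 ≤ A i j * (v i - v j) ^ 2 :=
    fun i j => mul_nonneg (hA i j) (sq_nonneg _)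
  suffices 0 < ∑ i, ∑ j, A i j * (v i - v j) ^ 2 by
    rw [sum_mul_sub_sq_eq hrow hcol] at this
    linarith
  refine (Finset.sum_nonneg fun i _ => Finset.sum_nonneg fun j _ => hterm i j).lt_of_ne
    fun hzero => hv (hconn.eq_of_forall_adj ?_ i j)
  have hzero' : ∀ i j, A i j * (v i - v j) ^ 2 = 0 := fun i j => by
    rw [eq_comm, Finset.sum_eq_zero_iff_of_nonneg fun i _ =>
      Finset.sum_nonneg fun j _ => hterm i j] at hzero
    exact (Finset.sum_eq_zero_iff_of_nonneg fun j _ => hterm i j).1 (hzero i (mem_univ i)) j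
      (mem_univ j)
  have hedge : ∀ a b, 0 < A a b → v a = v b := fun a b hab => by
    simpa [hab.ne', sub_eq_zero] using hzero' a b
  rintro a b ⟨-, hab | hba⟩
  · exact hedge a b hab
  · exact (hedge b a hba).symm

theorem lt_one_of_mem_spectrum_sub_inv_card_smul_allOnes [DecidableEq n] {μ : ℝ}
    (hμ : μ ∈ spectrum ℝ (A - (Fintype.card n : ℝ)⁻¹ • of fun _ _ => 1)) : μ < 1 := by
  obtain ⟨v, hv, hμv⟩ := exists_mulVec_eq_smul_of_mem_spectrum hμ
  rcases eq_or_ne μ 0 with rfl | hμ0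
  · exact one_pos
  obtain ⟨i₀, -⟩ := Function.ne_iff.1 hv
  have hc : (Fintype.card n : ℝ) ≠ 0 := by
    have : Nonempty n := ⟨i₀⟩
    positivity
  have hJv : (of fun _ _ : n => (1 : ℝ)) *ᵥ v = 0 := by
    have := congrArg (mulVec (of fun _ _ : n => (1 : ℝ))) hμv
    rw [mulVec_mulVec, mul_sub, allOnes_mul_of_sum_col_eq_one hcol, Matrix.mul_smul,
      allOnes_mul_allOnes, smul_smul, inv_mul_cancel₀ hc, one_smul, sub_self, zero_mulVec,
      mulVec_smul] at this
    exact (smul_eq_zero.1 this.symm).resolve_left hμ0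
  have hsum : ∑ i, v i = 0 := by simpa [mulVec, dotProduct] using congrFun hJv i₀
  rw [sub_mulVec, smul_mulVec, hJv, smul_zero, sub_zero] at hμv
  obtain ⟨i, j, hij⟩ := exists_apply_ne_of_sum_eq_zero hv hsum
  have hlt := dotProduct_mulVec_lt_dotProduct_self hA hrow hcol hconn hij
  rw [hμv, dotProduct_smul, smul_eq_mul] at hlt
  have hpos : 0 < v ⬝ᵥ v := by simpa using dotProduct_star_self_pos_iff.2 hv
  exact (mul_lt_iff_lt_one_left hpos).1 hlt

end Connected

end Matrix

theorem stmt5_general (N : ℕ) (W : Matrix (Fin N) (Fin N) ℝ)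
    (hsymm : W.IsSymm) (hnonneg : ∀ i j, 0 ≤ W i j)
    (hrow : ∀ i, ∑ s, W i s = 1) (hpsd : W.PosSemidef)
    (hconn : (SimpleGraph.fromRel fun i j : Fin N => 0 < W i j).Connected) :
    (W - (N : ℝ)⁻¹ • Matrix.of fun _ _ : Fin N => (1 : ℝ)).IsSymm ∧
    (W - (N : ℝ)⁻¹ • Matrix.of fun _ _ : Fin N => (1 : ℝ)).PosSemidef ∧
    ∀ μ ∈ spectrum ℝ (W - (N : ℝ)⁻¹ • Matrix.of fun _ _ : Fin N => (1 : ℝ)),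
      μ ∈ Set.Ico (0 : ℝ) 1 := by
  have hN : (Fintype.card (Fin N) : ℝ) ≠ 0 := by
    have := hconn.nonempty
    positivity
  have hcol : ∀ j, ∑ i, W i j = 1 := fun j => by simpa only [hsymm.apply] using hrow j
  have hpsd₀ : (W - (N : ℝ)⁻¹ • Matrix.of fun _ _ : Fin N => (1 : ℝ)).PosSemidef := by
    simpa only [Fintype.card_fin] using hpsd.sub_inv_card_smul_allOnes hN hrow hcol
  refine ⟨hsymm.sub ((IsSymm.ext fun _ _ => rfl).smul _), hpsd₀, fun μ hμ => ⟨?_, ?_⟩⟩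
  · obtain ⟨i, rfl⟩ := hpsd₀.isHermitian.spectrum_real_eq_range_eigenvalues ▸ hμ
    exact hpsd₀.eigenvalues_nonneg i
  · refine lt_one_of_mem_spectrum_sub_inv_card_smul_allOnes hnonneg hrow hcol
      hconn.preconnected ?_
    rwa [Fintype.card_fin]

/-- If W is symmetric, entrywise nonnegative, row-stochastic, positive semidefinite,
has positive diagonal, and its positive off-diagonal support graph is connected, then
W₀ = W − (1/N)𝟙𝟙ᵀ is symmetric positive semidefinite with all eigenvalues in [0,1). -/
theorem stmt5 (N : ℕ) (W : Matrix (Fin N) (Fin N) ℝ)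
    (hsymm : W.IsSymm) (hnonneg : ∀ i j, 0 ≤ W i j)
    (hrow : ∀ i, ∑ s, W i s = 1) (hpsd : W.PosSemidef)
    (hdiag : ∀ i, 0 < W i i)
    (hconn : (SimpleGraph.fromRel fun i j : Fin N => 0 < W i j).Connected) :
    (W - (N : ℝ)⁻¹ • Matrix.of fun _ _ : Fin N => (1 : ℝ)).IsSymm ∧
    (W - (N : ℝ)⁻¹ • Matrix.of fun _ _ : Fin N => (1 : ℝ)).PosSemidef ∧
    ∀ μ ∈ spectrum ℝ (W - (N : ℝ)⁻¹ • Matrix.of fun _ _ : Fin N => (1 : ℝ)),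
      μ ∈ Set.Ico (0 : ℝ) 1 :=
  stmt5_general N W hsymm hnonneg hrow hpsd hconn
end

section
/- Let W₀ be a real symmetric positive semidefinite a×a matrix all of whose eigenvalues are strictly less than 1. Define Q = [[2I_a, (I_a−W₀)⁻¹ − 2I_a], [(I_a−W₀)⁻¹ − 2I_a, (I_a−W₀)⁻² − 2(I_a−W₀)⁻¹ + 2I_a]] and U₀ = [[W₀, W₀],[0, W₀]]. Then Q − U₀ᵀ Q U₀ equals the block matrix [[2(I_a−W₀)(I_a+W₀), −(I_a−W₀)],[−(I_a−W₀), I_a]], and this matrix is symmetric positive definite. -/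
/-!
Writing `A = (1 - W)⁻¹`, the block identity only uses `A W = W A = A - 1` and `Wᵀ = W`.
For definiteness, the Schur complement of the identity block is
`2 (1 - W)(1 + W) - (1 - W)² = (1 - W)(1 + 3W)`, a product of commuting positive definite
matrices: `1 - W > 0` because the spectrum of `W` lies below `1`, and `1 + 3W > 0` because `W ≥ 0`.
-/

open Matrix
open scoped ComplexOrder

namespace Matrix

variable {m n 𝕜 : Type*} [Fintype m] [Fintype n] [DecidableEq m] [DecidableEq n] [RCLike 𝕜]

theorem posDef_fromBlocks₂₂ {A : Matrix m m 𝕜} {B : Matrix m n 𝕜} {D : Matrix n n 𝕜}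
    (hD : D.PosDef) (hS : (A - B * D⁻¹ * Bᴴ).PosDef) :
    (fromBlocks A B Bᴴ D).PosDef := by
  let _ : Invertible D := hD.isUnit.invertible
  refine ((PosDef.fromBlocks₂₂ A B hD).mpr hS.posSemidef).posDef_iff_isUnit.mpr ?_
  rw [isUnit_iff_isUnit_det, det_fromBlocks₂₂, invOf_eq_nonsing_inv]
  exact ((isUnit_iff_isUnit_det _).mp hD.isUnit).mul ((isUnit_iff_isUnit_det _).mp hS.isUnit)

open scoped MatrixOrder in
theorem PosDef.mul_of_commute {A B : Matrix n n 𝕜} (hA : A.PosDef) (hB : B.PosDef)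
    (hAB : Commute A B) : (A * B).PosDef :=
  ((hA.isStrictlyPositive.commute_iff hB.isStrictlyPositive).mp hAB).posDef

open scoped MatrixOrder in
theorem posDef_one_sub_of_spectrum_lt_one {W : Matrix n n 𝕜} (hW : W.IsHermitian)
    (h : ∀ μ ∈ spectrum ℝ W, μ < 1) : (1 - W).PosDef := by
  refine IsStrictlyPositive.posDef <|
    (StarOrderedRing.isStrictlyPositive_iff_spectrum_pos (R := ℝ) _
      (isHermitian_one.sub hW)).mpr ?_
  intro x hx
  rw [← map_one (algebraMap ℝ (Matrix n n 𝕜)), ← spectrum.singleton_sub_eq] at hx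
  obtain ⟨_, rfl, μ, hμ, rfl⟩ := hx
  simpa using h μ hμ

end Matrix

section Consensus

variable {n R : Type*} [Fintype n] [DecidableEq n] [CommRing R]

noncomputable def consensusQ (W : Matrix n n R) : Matrix (n ⊕ n) (n ⊕ n) R :=
  fromBlocks (2 • 1) ((1 - W)⁻¹ - 2 • 1) ((1 - W)⁻¹ - 2 • 1)
    ((1 - W)⁻¹ ^ 2 - 2 • (1 - W)⁻¹ + 2 • 1)

def consensusU (W : Matrix n n R) : Matrix (n ⊕ n) (n ⊕ n) R :=
  fromBlocks W W 0 W

theorem consensusQ_sub_transpose_mul_mul {W : Matrix n n R} (hW : W.IsSymm)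
    (hu : IsUnit (1 - W).det) :
    consensusQ W - (consensusU W)ᵀ * consensusQ W * consensusU W =
      fromBlocks (2 • ((1 - W) * (1 + W))) (-(1 - W)) (-(1 - W)) 1 := by
  simp only [consensusQ, consensusU, fromBlocks_transpose, hW.eq, transpose_zero,
    fromBlocks_multiply, sub_eq_add_neg (fromBlocks _ _ _ _), fromBlocks_neg, fromBlocks_add,
    fromBlocks_inj]
  set A := (1 - W)⁻¹
  have hAW : A * W = A - 1 := by
    have h := nonsing_inv_mul (1 - W) hu
    rw [mul_sub, mul_one] at h
    rw [← h]; abel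
  have hWA : W * A = A - 1 := by
    have h := mul_nonsing_inv (1 - W) hu
    rw [sub_mul, one_mul] at h
    rw [← h]; abel
  have hWAA : W * (A * A) = A * A - A := by rw [← mul_assoc, hWA, sub_mul, one_mul]
  refine ⟨?_, ?_, ?_, ?_⟩ <;>
    simp only [pow_two, Matrix.zero_mul, Matrix.mul_zero, add_zero, Matrix.mul_smul,
      Matrix.smul_mul, mul_one, one_mul, Matrix.mul_sub, Matrix.sub_mul, Matrix.mul_add,
      Matrix.add_mul, mul_assoc, hAW, hWA, hWAA] <;>
    abel

end Consensus

/-- For symmetric PSD W₀ with eigenvalues < 1, the matrix Q − U₀ᵀQU₀ equals the stated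
block matrix and is symmetric positive definite. -/
theorem stmt9 (a : ℕ) (W₀ : Matrix (Fin a) (Fin a) ℝ)
    (hpsd : W₀.PosSemidef) (hspec : ∀ μ ∈ spectrum ℝ W₀, μ < 1)
    (Q U₀ : Matrix (Fin a ⊕ Fin a) (Fin a ⊕ Fin a) ℝ)
    (hQ : Q = Matrix.fromBlocks
      (2 • (1 : Matrix (Fin a) (Fin a) ℝ)) ((1 - W₀)⁻¹ - 2 • 1)
      ((1 - W₀)⁻¹ - 2 • 1) (((1 - W₀)⁻¹) ^ 2 - 2 • (1 - W₀)⁻¹ + 2 • 1))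
    (hU₀ : U₀ = Matrix.fromBlocks W₀ W₀ 0 W₀) :
    Q - U₀ᵀ * Q * U₀ =
      Matrix.fromBlocks (2 • ((1 - W₀) * (1 + W₀))) (-(1 - W₀)) (-(1 - W₀)) 1 ∧
    (Q - U₀ᵀ * Q * U₀).PosDef := by
  have hP : (1 - W₀).PosDef := posDef_one_sub_of_spectrum_lt_one hpsd.isHermitian hspec
  have hblocks : Q - U₀ᵀ * Q * U₀ =
      fromBlocks (2 • ((1 - W₀) * (1 + W₀))) (-(1 - W₀)) (-(1 - W₀)) 1 := by
    subst hQ hU₀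
    exact consensusQ_sub_transpose_mul_mul (isHermitian_iff_isSymm.mp hpsd.isHermitian)
      ((isUnit_iff_isUnit_det _).mp hP.isUnit)
  refine ⟨hblocks, hblocks ▸ ?_⟩
  have hB : (-(1 - W₀))ᴴ = -(1 - W₀) := by rw [conjTranspose_neg, hP.isHermitian.eq]
  have hschur : 2 • ((1 - W₀) * (1 + W₀)) - -(1 - W₀) * 1⁻¹ * (-(1 - W₀))ᴴ =
      (1 - W₀) * (1 + 3 • W₀) := by
    rw [hB, inv_one]; noncomm_ring
  have hcomm : Commute (1 - W₀) (1 + 3 • W₀) :=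
    (Commute.one_left _).sub_left
      ((Commute.one_right W₀).add_right ((Commute.refl W₀).smul_right 3))
  have h3W : (1 + 3 • W₀).PosDef := PosDef.one.add_posSemidef (hpsd.smul (by norm_num))
  have := posDef_fromBlocks₂₂ PosDef.one (hschur ▸ hP.mul_of_commute h3W hcomm)
  rwa [hB] at this
end

section
/- For each i = 1,…,N, let f_i : ℝ^{n₁+⋯+n_N} → ℝ be differentiable and, as a function of the block x_i ∈ ℝ^{n_i} with the other blocks fixed, convex; assume f_i(x) = 0 whenever x_i = 0; and let every component g_i^j of g_i : ℝ^{n_i} → ℝ^{q_i} be differentiable and convex with g_i^j(0) ≤ 0. Suppose x* ∈ ℝ^{n₁+⋯+n_N}, λ* ∈ ℝ^{n₀}, and α_i* ∈ ℝ^{q_i} satisfy, for each i: (stationarity) ∇_{x_i} Σ_{s=1}^N f_s(x*) − A_iᵀλ* + J_{g_i}(x_i*)ᵀ α_i* = 0, where J_{g_i} denotes the Jacobian matrix of g_i; (dual feasibility) α_i* ≥ 0 componentwise; and (complementary slackness) α_{i,j}* · g_i^j(x_i*) = 0 for all j. Then, with the shadow price π_i* = A_iᵀλ* − ∇_{x_i}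 Σ_{s≠i} f_s(x*), every participant's net cost is nonpositive: f_i(x*) − (π_i*)ᵀ x_i* ≤ 0 for every i. -/
/-!
Stationarity rewrites the shadow price as `πᵢ* = ∇_{xᵢ} fᵢ(x*) + ∑ⱼ αᵢⱼ* ∇gᵢʲ(xᵢ*)`. The tangent
inequality for the convex block function `z ↦ fᵢ(x* with xᵢ := z)` between `xᵢ*` and `0`, where it
vanishes, gives `fᵢ(x*) ≤ ⟪∇_{xᵢ} fᵢ(x*), xᵢ*⟫`. For each constraint either `αᵢⱼ* = 0` or
`gᵢʲ(xᵢ*) = 0 ≥ gᵢʲ(0)`, and then the same inequality gives `⟪∇gᵢʲ(xᵢ*), xᵢ*⟫ ≥ 0`; so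
`⟪πᵢ*, xᵢ*⟫ ≥ fᵢ(x*)`.
-/

open RealInnerProductSpace

section Gradient

variable {E : Type*} [NormedAddCommGroup E] [InnerProductSpace ℝ E] [CompleteSpace E]
  {φ ψ : E → ℝ} {s : Set E} {x y : E}

lemma gradient_fun_add (hφ : DifferentiableAt ℝ φ x) (hψ : DifferentiableAt ℝ ψ x) :
    gradient (fun z => φ z + ψ z) x = gradient φ x + gradient ψ x := by
  simp only [gradient, fderiv_fun_add hφ hψ, map_add]

lemma ConvexOn.inner_gradient_sub_le (hφ : ConvexOn ℝ s φ) (hx : x ∈ s) (hy : y ∈ s)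
    (hd : DifferentiableAt ℝ φ x) :
    ⟪gradient φ x, y - x⟫ ≤ φ y - φ x := by
  let L : ℝ →ᵃ[ℝ] E := AffineMap.lineMap x y
  have hline : ConvexOn ℝ (L ⁻¹' s) (φ ∘ L) := hφ.comp_affineMap L
  have hderiv : HasDerivAt (φ ∘ L) ⟪gradient φ x, y - x⟫ 0 := by
    have hF : HasFDerivAt φ (fderiv ℝ φ x) (L 0) := by simpa [L] using hd.hasFDerivAt
    simpa [inner_gradient_left] using hF.comp_hasDerivAt 0 AffineMap.hasDerivAt_lineMap
  simpa [slope_def_field, L] using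
    hline.le_slope_of_hasDerivAt (by simpa [L] using hx) (by simpa [L] using hy) zero_lt_one hderiv

lemma ConvexOn.inner_gradient_self_nonneg (hφ : ConvexOn ℝ s φ) (h0 : 0 ∈ s) (hx : x ∈ s)
    (hle : φ 0 ≤ φ x) :
    0 ≤ ⟪gradient φ x, x⟫ := by
  by_cases hd : DifferentiableAt ℝ φ x
  · have := hφ.inner_gradient_sub_le hx h0 hd
    rw [zero_sub, inner_neg_right] at this
    linarith
  · simp [gradient_eq_zero_of_not_differentiableAt hd]

end Gradient

theorem stmt10_general (N n₀ : ℕ) (n q : Fin N → ℕ)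
    (f : Fin N → (∀ i, EuclideanSpace ℝ (Fin (n i))) → ℝ)
    (g : ∀ i, EuclideanSpace ℝ (Fin (n i)) → Fin (q i) → ℝ)
    (A : ∀ i, EuclideanSpace ℝ (Fin (n i)) →L[ℝ] EuclideanSpace ℝ (Fin n₀))
    (hfdiff : ∀ i, Differentiable ℝ (f i))
    (hfconv : ∀ i (x : ∀ j, EuclideanSpace ℝ (Fin (n j))),
      ConvexOn ℝ Set.univ (fun z => f i (Function.update x i z)))
    (hfzero : ∀ i (x : ∀ j, EuclideanSpace ℝ (Fin (n j))), x i = 0 → f i x = 0)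
    (hgconv : ∀ i j, ConvexOn ℝ Set.univ (fun z => g i z j))
    (hg0 : ∀ i j, g i 0 j ≤ 0)
    (xstar : ∀ i, EuclideanSpace ℝ (Fin (n i)))
    (lamstar : EuclideanSpace ℝ (Fin n₀))
    (αstar : ∀ i, Fin (q i) → ℝ)
    -- stationarity: ∇_{xᵢ} Σ_s f_s(x*) − Aᵢᵀλ* + J_{gᵢ}(xᵢ*)ᵀ αᵢ* = 0
    (hstat : ∀ i,
      gradient (fun z => ∑ s, f s (Function.update xstar i z)) (xstar i)
        - ContinuousLinearMap.adjoint (A i) lamstar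
        + ∑ j, αstar i j • gradient (fun z => g i z j) (xstar i) = 0)
    -- dual feasibility
    (hdual : ∀ i j, 0 ≤ αstar i j)
    -- complementary slackness
    (hcomp : ∀ i j, αstar i j * g i (xstar i) j = 0) :
    ∀ i, f i xstar -
      ⟪ContinuousLinearMap.adjoint (A i) lamstar
        - gradient (fun z => ∑ s ∈ Finset.univ.erase i,
            f s (Function.update xstar i z)) (xstar i),
        xstar i⟫ ≤ 0 := by
  intro i
  set fᵢ := fun z => f i (Function.update xstar i z)
  set others := fun z => ∑ s ∈ Finset.univ.erase i, f s (Function.update xstar i z)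
  have hdiff : ∀ s, DifferentiableAt ℝ (fun z => f s (Function.update xstar i z)) (xstar i) :=
    fun s => (hfdiff s _).comp _ (hasFDerivAt_update xstar _).differentiableAt
  have hprice : ContinuousLinearMap.adjoint (A i) lamstar - gradient others (xstar i)
      = gradient fᵢ (xstar i) + ∑ j, αstar i j • gradient (fun z => g i z j) (xstar i) := by
    have hsplit : gradient (fun z => ∑ s, f s (Function.update xstar i z)) (xstar i)
        = gradient fᵢ (xstar i) + gradient others (xstar i) := by
      simp_rw [← Finset.add_sum_erase _ _ (Finset.mem_univ i)]
      exact gradient_fun_add (hdiff i) (DifferentiableAt.fun_sum fun s _ => hdiff s)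
    have h := hstat i
    rw [hsplit] at h
    rw [← sub_eq_zero, ← neg_eq_zero, ← h]
    abel
  have hfᵢ : f i xstar ≤ ⟪gradient fᵢ (xstar i), xstar i⟫ := by
    have := (hfconv i xstar).inner_gradient_sub_le trivial trivial (hdiff i) (y := 0)
    rw [zero_sub, inner_neg_right, hfzero i _ (Function.update_self ..),
      Function.update_eq_self] at this
    linarith
  have hg : 0 ≤ ∑ j, ⟪αstar i j • gradient (fun z => g i z j) (xstar i), xstar i⟫ := by
    refine Finset.sum_nonneg fun j _ => ?_
    rw [real_inner_smul_left]
    rcases mul_eq_zero.mp (hcomp i j) with hα | hactive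
    · simp [hα]
    · exact mul_nonneg (hdual i j) <| (hgconv i j).inner_gradient_self_nonneg trivial trivial
        (by simpa [hactive] using hg0 i j)
  rw [hprice, inner_add_left, sum_inner]
  linarith

/-- Individual rationality of the shadow pricing mechanism: at a KKT point of (P₁),
with the shadow price πᵢ* = Aᵢᵀλ* − ∇_{xᵢ} Σ_{s≠i} f_s(x*), every participant's net
cost fᵢ(x*) − ⟪πᵢ*, xᵢ*⟫ is nonpositive. -/
theorem stmt10 (N n₀ : ℕ) (n q : Fin N → ℕ)
    (f : Fin N → (∀ i, EuclideanSpace ℝ (Fin (n i))) → ℝ)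
    (g : ∀ i, EuclideanSpace ℝ (Fin (n i)) → Fin (q i) → ℝ)
    (A : ∀ i, EuclideanSpace ℝ (Fin (n i)) →L[ℝ] EuclideanSpace ℝ (Fin n₀))
    (hfdiff : ∀ i, Differentiable ℝ (f i))
    (hfconv : ∀ i (x : ∀ j, EuclideanSpace ℝ (Fin (n j))),
      ConvexOn ℝ Set.univ (fun z => f i (Function.update x i z)))
    (hfzero : ∀ i (x : ∀ j, EuclideanSpace ℝ (Fin (n j))), x i = 0 → f i x = 0)
    (hgdiff : ∀ i j, Differentiable ℝ (fun z => g i z j))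
    (hgconv : ∀ i j, ConvexOn ℝ Set.univ (fun z => g i z j))
    (hg0 : ∀ i j, g i 0 j ≤ 0)
    (xstar : ∀ i, EuclideanSpace ℝ (Fin (n i)))
    (lamstar : EuclideanSpace ℝ (Fin n₀))
    (αstar : ∀ i, Fin (q i) → ℝ)
    -- stationarity: ∇_{xᵢ} Σ_s f_s(x*) − Aᵢᵀλ* + J_{gᵢ}(xᵢ*)ᵀ αᵢ* = 0
    (hstat : ∀ i,
      gradient (fun z => ∑ s, f s (Function.update xstar i z)) (xstar i)
        - ContinuousLinearMap.adjoint (A i) lamstar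
        + ∑ j, αstar i j • gradient (fun z => g i z j) (xstar i) = 0)
    -- dual feasibility
    (hdual : ∀ i j, 0 ≤ αstar i j)
    -- complementary slackness
    (hcomp : ∀ i j, αstar i j * g i (xstar i) j = 0) :
    ∀ i, f i xstar -
      ⟪ContinuousLinearMap.adjoint (A i) lamstar
        - gradient (fun z => ∑ s ∈ Finset.univ.erase i,
            f s (Function.update xstar i z)) (xstar i),
        xstar i⟫ ≤ 0 :=
  stmt10_general N n₀ n q f g A hfdiff hfconv hfzero hgconv hg0 xstar lamstar αstar hstat hdual
    hcomp
end

section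
/- For each i = 1,…,N, let f_i : ℝ^{n₁+⋯+n_N} → ℝ be differentiable and, as a function of the block x_i ∈ ℝ^{n_i} with the other blocks fixed, convex, and let every component g_i^j of g_i : ℝ^{n_i} → ℝ^{q_i} be differentiable and convex. Suppose x*, λ*, α₁*,…,α_N* satisfy the full Karush–Kuhn–Tucker conditions of problem (P₁): for each i, ∇_{x_i} Σ_s f_s(x*) − A_iᵀλ* + J_{g_i}(x_i*)ᵀ α_i* = 0, g_i(x_i*) ≤ 0, Σ_s A_s x_s* = d, α_i* ≥ 0, and α_{i,j}* · g_i^j(x_i*) = 0 for all j. Define π_i* = A_iᵀλ* − ∇_{x_i} Σ_{s≠i} f_s(x*). Then for each i, x_i* is a global minimizer of the function x_i ↦ f_i(x_i, x_{-i}*) − (π_i*)ᵀ x_i over the set {x_i ∈ ℝ^{n_i} : g_i(x_i) ≤ 0 and A_i x_i = d − Σ_{s≠i} A_s x_s*}; that is, x* is an equilibrium of the shadow-pricing game among the participants. -/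
open Matrix Finset RealInnerProductSpace

/-!
Each participant's net cost `zᵢ ↦ fᵢ(zᵢ, x₋ᵢ*) − ⟪πᵢ*, zᵢ⟫` is convex, and the price `πᵢ*` is
chosen so that the stationarity condition of (P₁) becomes the stationarity condition of the
participant's own problem, with multipliers `αᵢ*` for `gᵢ ≤ 0` (the coupling constraint is
absorbed into the price). The first-order inequality for convex differentiable functions,
`φ x + φ'(y − x) ≤ φ y`, then shows that a KKT point of this convex problem is a global minimizer:
complementary slackness and `α* ≥ 0` make the multiplier term nonpositive at every feasible `z`.
-/

section Convex

variable {E : Type*} [NormedAddCommGroup E]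

theorem ConvexOn.add_le_of_hasFDerivAt [NormedSpace ℝ E] {s : Set E} {φ : E → ℝ}
    {φ' : E →L[ℝ] ℝ} {x y : E} (hφ : ConvexOn ℝ s φ) (hx : x ∈ s) (hy : y ∈ s)
    (hφ' : HasFDerivAt φ φ' x) :
    φ x + φ' (y - x) ≤ φ y := by
  set L : ℝ →ᵃ[ℝ] E := AffineMap.lineMap x y
  have hL : ∀ t : ℝ, L t = x + t • (y - x) := fun t => by
    rw [AffineMap.lineMap_apply, vsub_eq_sub, vadd_eq_add, add_comm]
  have hline : ConvexOn ℝ (L ⁻¹' s) (φ ∘ L) := hφ.comp_affineMap L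
  have hderiv : HasDerivAt (φ ∘ L) (φ' (y - x)) 0 := by
    have hLd : HasDerivAt L (y - x) 0 := by
      rw [show ⇑L = fun t : ℝ => x + t • (y - x) from funext hL]
      simpa using ((hasDerivAt_id (0 : ℝ)).smul_const (y - x)).const_add x
    exact (by simpa [hL] using hφ' : HasFDerivAt φ φ' (L 0)).comp_hasDerivAt 0 hLd
  have hslope := hline.le_slope_of_hasDerivAt (by simpa [hL] using hx)
    (by simpa [hL] using hy) one_pos hderiv
  simp only [slope_def_field, Function.comp_apply, hL, zero_smul, add_zero, one_smul,
    add_sub_cancel, sub_zero, div_one] at hslope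
  linarith

variable [InnerProductSpace ℝ E] [CompleteSpace E]

theorem ConvexOn.add_inner_le_of_hasGradientAt {s : Set E} {φ : E → ℝ} {G x y : E}
    (hφ : ConvexOn ℝ s φ) (hx : x ∈ s) (hy : y ∈ s) (hG : HasGradientAt φ G x) :
    φ x + ⟪G, y - x⟫ ≤ φ y := by
  simpa [InnerProductSpace.toDual_apply_apply] using
    hφ.add_le_of_hasFDerivAt hx hy hG.hasFDerivAt

theorem HasGradientAt.add {φ ψ : E → ℝ} {G H x : E} (hφ : HasGradientAt φ G x)
    (hψ : HasGradientAt ψ H x) : HasGradientAt (fun w => φ w + ψ w) (G + H) x := by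
  rw [hasGradientAt_iff_hasFDerivAt, map_add]
  exact hφ.hasFDerivAt.add hψ.hasFDerivAt

section KKT

variable {ι : Type*} [Fintype ι] {s : Set E} {g : ι → E → ℝ} {G : ι → E} {α : ι → ℝ} {u z : E}

theorem inner_sum_smul_multiplier_nonpos (hg : ∀ j, ConvexOn ℝ s (g j)) (hu : u ∈ s)
    (hz : z ∈ s) (hG : ∀ j, HasGradientAt (g j) (G j) u) (hα : ∀ j, 0 ≤ α j)
    (hcomp : ∀ j, α j * g j u = 0) (hgz : ∀ j, g j z ≤ 0) :
    ⟪∑ j, α j • G j, z - u⟫ ≤ 0 := by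
  rw [sum_inner]
  refine Finset.sum_nonpos fun j _ => ?_
  have hgrad := (hg j).add_inner_le_of_hasGradientAt hu hz (hG j)
  rw [real_inner_smul_left]
  nlinarith [hα j, hcomp j, hgz j]

theorem sub_inner_le_of_kkt {h : E → ℝ} {p : E} (hh : ConvexOn ℝ s h)
    (hg : ∀ j, ConvexOn ℝ s (g j)) (hu : u ∈ s) (hz : z ∈ s)
    (hG : ∀ j, HasGradientAt (g j) (G j) u) (hstat : HasGradientAt h (p - ∑ j, α j • G j) u)
    (hα : ∀ j, 0 ≤ α j) (hcomp : ∀ j, α j * g j u = 0) (hgz : ∀ j, g j z ≤ 0) :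
    h u - ⟪p, u⟫ ≤ h z - ⟪p, z⟫ := by
  have hconv := hh.add_inner_le_of_hasGradientAt hu hz hstat
  have hmult := inner_sum_smul_multiplier_nonpos hg hu hz hG hα hcomp hgz
  rw [inner_sub_left, inner_sub_right] at hconv
  linarith

end KKT

end Convex

theorem stmt11_general (N n₀ : ℕ) (n q : Fin N → ℕ)
    (f : Fin N → (∀ i, EuclideanSpace ℝ (Fin (n i))) → ℝ)
    (g : ∀ i, EuclideanSpace ℝ (Fin (n i)) → Fin (q i) → ℝ)
    (A : ∀ i, EuclideanSpace ℝ (Fin (n i)) →L[ℝ] EuclideanSpace ℝ (Fin n₀))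
    (d : EuclideanSpace ℝ (Fin n₀))
    (hfdiff : ∀ i, Differentiable ℝ (f i))
    (hfconv : ∀ i (x : ∀ j, EuclideanSpace ℝ (Fin (n j))),
      ConvexOn ℝ Set.univ (fun z => f i (Function.update x i z)))
    (hgdiff : ∀ i j, Differentiable ℝ (fun z => g i z j))
    (hgconv : ∀ i j, ConvexOn ℝ Set.univ (fun z => g i z j))
    (xstar : ∀ i, EuclideanSpace ℝ (Fin (n i)))
    (lamstar : EuclideanSpace ℝ (Fin n₀))
    (αstar : ∀ i, Fin (q i) → ℝ)
    -- stationarity: ∇_{xᵢ} Σ_s f_s(x*) − Aᵢᵀλ* + J_{gᵢ}(xᵢ*)ᵀ αᵢ* = 0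
    (hstat : ∀ i,
      gradient (fun z => ∑ s, f s (Function.update xstar i z)) (xstar i)
        - ContinuousLinearMap.adjoint (A i) lamstar
        + ∑ j, αstar i j • gradient (fun z => g i z j) (xstar i) = 0)
    -- dual feasibility
    (hdual : ∀ i j, 0 ≤ αstar i j)
    -- complementary slackness
    (hcomp : ∀ i j, αstar i j * g i (xstar i) j = 0) :
    ∀ i, ∀ z : EuclideanSpace ℝ (Fin (n i)),
      (∀ j, g i z j ≤ 0) →
      A i z = d - ∑ s ∈ Finset.univ.erase i, A s (xstar s) →
      f i xstar -
        ⟪ContinuousLinearMap.adjoint (A i) lamstar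
          - gradient (fun w => ∑ s ∈ Finset.univ.erase i,
              f s (Function.update xstar i w)) (xstar i), xstar i⟫ ≤
      f i (Function.update xstar i z) -
        ⟪ContinuousLinearMap.adjoint (A i) lamstar
          - gradient (fun w => ∑ s ∈ Finset.univ.erase i,
              f s (Function.update xstar i w)) (xstar i), z⟫ := by
  intro i z hgz _
  have hdiff : ∀ s, Differentiable ℝ (fun w => f s (Function.update xstar i w)) := fun s =>
    (hfdiff s).comp fun y => (hasFDerivAt_update xstar y).differentiableAt
  set own := fun w => f i (Function.update xstar i w)
  set others := fun w => ∑ s ∈ Finset.univ.erase i, f s (Function.update xstar i w)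
  have hothers : HasGradientAt others (gradient others (xstar i)) (xstar i) :=
    (Differentiable.fun_sum fun s _ => hdiff s).differentiableAt.hasGradientAt
  have hsplit : (fun w => ∑ s, f s (Function.update xstar i w)) = fun w => own w + others w :=
    funext fun w => (Finset.add_sum_erase _ _ (Finset.mem_univ i)).symm
  have hown : HasGradientAt own
      (ContinuousLinearMap.adjoint (A i) lamstar - gradient others (xstar i)
        - ∑ j, αstar i j • gradient (fun w => g i w j) (xstar i)) (xstar i) := by
    have hsum := ((hdiff i).differentiableAt.hasGradientAt).add hothers
    have hstat_i := hstat i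
    rw [hsplit, hsum.gradient] at hstat_i
    convert (hdiff i).differentiableAt.hasGradientAt using 1
    linear_combination (norm := module) -hstat_i
  have hx : f i xstar = own (xstar i) := by simp only [own, Function.update_eq_self]
  rw [hx]
  exact sub_inner_le_of_kkt (hfconv i xstar) (fun j => hgconv i j) (Set.mem_univ _)
    (Set.mem_univ _) (fun j => (hgdiff i j).differentiableAt.hasGradientAt) hown
    (hdual i) (hcomp i) hgz

/-- Social efficiency of the shadow pricing mechanism: at a KKT point of (P₁), every
participant's component xᵢ* globally minimizes its own priced net cost
xᵢ ↦ fᵢ(xᵢ, x₋ᵢ*) − ⟪πᵢ*, xᵢ⟫ over its feasible unilateral deviations, i.e. x* is an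
equilibrium of the shadow-pricing game. -/
theorem stmt11 (N n₀ : ℕ) (n q : Fin N → ℕ)
    (f : Fin N → (∀ i, EuclideanSpace ℝ (Fin (n i))) → ℝ)
    (g : ∀ i, EuclideanSpace ℝ (Fin (n i)) → Fin (q i) → ℝ)
    (A : ∀ i, EuclideanSpace ℝ (Fin (n i)) →L[ℝ] EuclideanSpace ℝ (Fin n₀))
    (d : EuclideanSpace ℝ (Fin n₀))
    (hfdiff : ∀ i, Differentiable ℝ (f i))
    (hfconv : ∀ i (x : ∀ j, EuclideanSpace ℝ (Fin (n j))),
      ConvexOn ℝ Set.univ (fun z => f i (Function.update x i z)))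
    (hgdiff : ∀ i j, Differentiable ℝ (fun z => g i z j))
    (hgconv : ∀ i j, ConvexOn ℝ Set.univ (fun z => g i z j))
    (xstar : ∀ i, EuclideanSpace ℝ (Fin (n i)))
    (lamstar : EuclideanSpace ℝ (Fin n₀))
    (αstar : ∀ i, Fin (q i) → ℝ)
    -- stationarity: ∇_{xᵢ} Σ_s f_s(x*) − Aᵢᵀλ* + J_{gᵢ}(xᵢ*)ᵀ αᵢ* = 0
    (hstat : ∀ i,
      gradient (fun z => ∑ s, f s (Function.update xstar i z)) (xstar i)
        - ContinuousLinearMap.adjoint (A i) lamstar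
        + ∑ j, αstar i j • gradient (fun z => g i z j) (xstar i) = 0)
    -- primal feasibility
    (hfeas_g : ∀ i j, g i (xstar i) j ≤ 0)
    (hfeas_A : ∑ s, A s (xstar s) = d)
    -- dual feasibility
    (hdual : ∀ i j, 0 ≤ αstar i j)
    -- complementary slackness
    (hcomp : ∀ i j, αstar i j * g i (xstar i) j = 0) :
    ∀ i, ∀ z : EuclideanSpace ℝ (Fin (n i)),
      (∀ j, g i z j ≤ 0) →
      A i z = d - ∑ s ∈ Finset.univ.erase i, A s (xstar s) →
      f i xstar -
        ⟪ContinuousLinearMap.adjoint (A i) lamstar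
          - gradient (fun w => ∑ s ∈ Finset.univ.erase i,
              f s (Function.update xstar i w)) (xstar i), xstar i⟫ ≤
      f i (Function.update xstar i z) -
        ⟪ContinuousLinearMap.adjoint (A i) lamstar
          - gradient (fun w => ∑ s ∈ Finset.univ.erase i,
              f s (Function.update xstar i w)) (xstar i), z⟫ :=
  stmt11_general N n₀ n q f g A d hfdiff hfconv hgdiff hgconv xstar lamstar αstar hstat hdual hcomp
end

section
/- Let N ≥ 1, c₀ > 0, d > 0, and γ ∈ ℝ^N. Consider minimizing F(x) = Σ_{i=1}^N [c₀(x_i² + x_i·Σ_{s=1}^N x_s) + γ_i x_i] over the set {x ∈ ℝ^N : Σ_{i=1}^N x_i = d and x_i ≥ 0 for all i}. Let T ⊆ {1,…,N} be nonempty, write T₀ = |T| and S = Σ_{t∈T} γ_t, and suppose: (a) d/T₀ + (1/(2c₀))(S/T₀ − γ_i) ≥ 0 for every i ∈ T; and (b) γ_i ≥ (2c₀d + S)/T₀ for every i ∉ T. Then the point x* defined by x_i* = d/T₀ + (1/(2c₀))(S/T₀ − γ_i) for i ∈ T and x_i* = 0 for i ∉ T is the unique global minimizer of F over the feasible set, and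 the Karush–Kuhn–Tucker conditions hold at x* with equality-constraint multiplier λ* = 2c₀d(T₀+1)/T₀ + S/T₀ and inequality multipliers α_i* = 0 for i ∈ T and α_i* = γ_i − (2c₀d + S)/T₀ ≥ 0 for i ∉ T. -/
open Finset

/-!
The cost is a quadratic with Hessian `2 c₀ (I + 𝟙𝟙ᵀ)`, so its exact second-order expansion at `y`
gives `F x - F y = ∇F(y) ⬝ (x - y) + c₀ (‖x - y‖² + (∑ (x - y))²)`.
If `y` satisfies the KKT conditions with multipliers `λ, α`, the linear term equals `∑ αᵢ xᵢ ≥ 0` on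
the feasible set, hence `F x - F y ≥ c₀ ‖x - y‖² > 0` for `x ≠ y`. The explicit point is built so
that `2 c₀ x*ᵢ + γᵢ` equals the common level `μ = (2 c₀ d + S) / T₀` on `T`, which makes
`λ* = μ + 2 c₀ d` and `α*ᵢ = γᵢ - μ` a KKT certificate.
-/

section CongestionCost

variable {ι : Type*} [Fintype ι]

def congestionCost (c₀ : ℝ) (γ x : ι → ℝ) : ℝ :=
  ∑ i, (c₀ * (x i ^ 2 + x i * ∑ s, x s) + γ i * x i)

def congestionCostGrad (c₀ : ℝ) (γ x : ι → ℝ) (i : ι) : ℝ :=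
  2 * c₀ * x i + 2 * c₀ * (∑ s, x s) + γ i

/-- KKT conditions for minimizing `congestionCost` over `{x | ∑ x = const, 0 ≤ x}`; `lam` is the
multiplier of the equality constraint. -/
def KKTConditions (c₀ : ℝ) (γ y : ι → ℝ) (lam : ℝ) (α : ι → ℝ) : Prop :=
  (∀ i, congestionCostGrad c₀ γ y i - lam - α i = 0) ∧ (∀ i, 0 ≤ α i) ∧ (∀ i, α i * y i = 0)

theorem congestionCost_eq (c₀ : ℝ) (γ x : ι → ℝ) :
    congestionCost c₀ γ x = ∑ i, (c₀ * x i ^ 2 + γ i * x i) + c₀ * (∑ i, x i) ^ 2 := by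
  simp only [congestionCost, mul_add, sum_add_distrib, ← mul_assoc, ← sum_mul, ← mul_sum]
  ring

theorem congestionCost_eq_add_grad (c₀ : ℝ) (γ x y : ι → ℝ) :
    congestionCost c₀ γ x = congestionCost c₀ γ y + ∑ i, congestionCostGrad c₀ γ y i * (x i - y i)
      + c₀ * (∑ i, (x i - y i) ^ 2 + (∑ i, (x i - y i)) ^ 2) := by
  have hquad : ∑ i, (c₀ * x i ^ 2 + γ i * x i) = ∑ i, (c₀ * y i ^ 2 + γ i * y i)
      + ∑ i, (2 * c₀ * y i + γ i) * (x i - y i) + c₀ * ∑ i, (x i - y i) ^ 2 := by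
    rw [mul_sum, ← sum_add_distrib, ← sum_add_distrib]
    exact sum_congr rfl fun i _ => by ring
  have hgrad : ∑ i, congestionCostGrad c₀ γ y i * (x i - y i)
      = ∑ i, (2 * c₀ * y i + γ i) * (x i - y i) + 2 * c₀ * (∑ i, y i) * ∑ i, (x i - y i) := by
    rw [mul_sum, ← sum_add_distrib]
    exact sum_congr rfl fun i _ => by rw [congestionCostGrad]; ring
  rw [congestionCost_eq, congestionCost_eq, hquad, hgrad, sum_sub_distrib]
  ring

theorem congestionCost_lt_of_kktConditions {c₀ : ℝ} (hc₀ : 0 < c₀) {γ x y α : ι → ℝ} {lam : ℝ}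
    (hy : KKTConditions c₀ γ y lam α) (hsum : ∑ i, x i = ∑ i, y i) (hx : ∀ i, 0 ≤ x i)
    (hne : x ≠ y) : congestionCost c₀ γ y < congestionCost c₀ γ x := by
  obtain ⟨hstat, hα, hcompl⟩ := hy
  have hlinear : ∑ i, congestionCostGrad c₀ γ y i * (x i - y i) = ∑ i, α i * x i := by
    calc ∑ i, congestionCostGrad c₀ γ y i * (x i - y i)
        = lam * (∑ i, x i - ∑ i, y i) + ∑ i, (α i * x i - α i * y i) := by
          rw [mul_sub, mul_sum, mul_sum, ← sum_sub_distrib, ← sum_add_distrib]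
          refine sum_congr rfl fun i _ => ?_
          rw [show congestionCostGrad c₀ γ y i = lam + α i by linarith [hstat i]]
          ring
      _ = ∑ i, α i * x i := by simp [hsum, hcompl]
  have hsq : 0 < ∑ i, (x i - y i) ^ 2 := by
    obtain ⟨j, hj⟩ := Function.ne_iff.mp hne
    exact sum_pos' (fun i _ => sq_nonneg _) ⟨j, mem_univ j, by positivity [sub_ne_zero.mpr hj]⟩
  have hαx : 0 ≤ ∑ i, α i * x i := sum_nonneg fun i _ => mul_nonneg (hα i) (hx i)
  rw [congestionCost_eq_add_grad c₀ γ x y, hlinear]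
  nlinarith [sq_nonneg (∑ i, (x i - y i))]

end CongestionCost

noncomputable section ExplicitSolution

variable {ι : Type*} [DecidableEq ι] (c₀ d : ℝ) (γ : ι → ℝ) (T : Finset ι)

def allocationLevel : ℝ := (2 * c₀ * d + ∑ t ∈ T, γ t) / #T

def allocation (i : ι) : ℝ :=
  if i ∈ T then d / #T + (1 / (2 * c₀)) * ((∑ t ∈ T, γ t) / #T - γ i) else 0

def allocationMultiplier (i : ι) : ℝ := if i ∈ T then 0 else γ i - allocationLevel c₀ d γ T

variable {c₀ d γ T}

theorem sum_allocation [Fintype ι] (hc₀ : c₀ ≠ 0) (hT : T.Nonempty) :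
    ∑ i, allocation c₀ d γ T i = d := by
  have hcard : (#T : ℝ) ≠ 0 := by exact_mod_cast hT.card_pos.ne'
  simp only [allocation, sum_ite_mem, univ_inter, sum_add_distrib, ← mul_sum, sum_sub_distrib,
    sum_const, nsmul_eq_mul]
  field_simp
  ring

theorem two_mul_allocation_add_of_mem (hc₀ : c₀ ≠ 0) {i : ι} (hi : i ∈ T) :
    2 * c₀ * allocation c₀ d γ T i + γ i = allocationLevel c₀ d γ T := by
  have hcard : (#T : ℝ) ≠ 0 := by exact_mod_cast (card_pos.mpr ⟨i, hi⟩).ne'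
  rw [allocation, if_pos hi, allocationLevel]
  field_simp
  ring

theorem kktConditions_allocation [Fintype ι] (hc₀ : c₀ ≠ 0) (hT : T.Nonempty)
    (hlevel : ∀ i ∉ T, allocationLevel c₀ d γ T ≤ γ i) :
    KKTConditions c₀ γ (allocation c₀ d γ T) (allocationLevel c₀ d γ T + 2 * c₀ * d)
      (allocationMultiplier c₀ d γ T) := by
  refine ⟨fun i => ?_, fun i => ?_, fun i => ?_⟩
  · rw [congestionCostGrad, sum_allocation hc₀ hT, allocationMultiplier]
    by_cases hi : i ∈ T
    · rw [if_pos hi]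
      linarith [two_mul_allocation_add_of_mem (d := d) (γ := γ) hc₀ hi]
    · rw [if_neg hi, allocation, if_neg hi]
      ring
  · rw [allocationMultiplier]
    split_ifs with hi
    exacts [le_rfl, sub_nonneg.mpr (hlevel i hi)]
  · rw [allocationMultiplier, allocation]
    split_ifs <;> simp

end ExplicitSolution

theorem stmt18_general (N : ℕ) (c₀ d : ℝ) (hc₀ : 0 < c₀)
    (γ : Fin N → ℝ)
    (F : (Fin N → ℝ) → ℝ)
    (hF : ∀ x, F x = ∑ i, (c₀ * ((x i) ^ 2 + x i * ∑ s, x s) + γ i * x i))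
    (T : Finset (Fin N)) (hT : T.Nonempty)
    (T₀ : ℕ) (hT₀ : T₀ = T.card) (S : ℝ) (hS : S = ∑ t ∈ T, γ t)
    (ha : ∀ i ∈ T, 0 ≤ d / (T₀ : ℝ) + (1 / (2 * c₀)) * (S / (T₀ : ℝ) - γ i))
    (hb : ∀ i ∉ T, (2 * c₀ * d + S) / (T₀ : ℝ) ≤ γ i)
    (xstar : Fin N → ℝ)
    (hxstar : ∀ i, xstar i =
      if i ∈ T then d / (T₀ : ℝ) + (1 / (2 * c₀)) * (S / (T₀ : ℝ) - γ i) else 0)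
    (lamstar : ℝ) (hlam : lamstar = 2 * c₀ * d * ((T₀ : ℝ) + 1) / (T₀ : ℝ) + S / (T₀ : ℝ))
    (αstar : Fin N → ℝ)
    (hα : ∀ i, αstar i = if i ∈ T then 0 else γ i - (2 * c₀ * d + S) / (T₀ : ℝ)) :
    -- x* is feasible and is the unique global minimizer of F over the feasible set
    ((∑ i, xstar i = d ∧ ∀ i, 0 ≤ xstar i) ∧
      (∀ x : Fin N → ℝ, (∑ i, x i = d) → (∀ i, 0 ≤ x i) → x ≠ xstar → F xstar < F x)) ∧
    -- the KKT conditions hold at x* with multipliers λ* and α*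
    ((∀ i, 2 * c₀ * xstar i + 2 * c₀ * (∑ s, xstar s) + γ i - lamstar - αstar i = 0) ∧
      (∀ i, 0 ≤ αstar i) ∧ (∀ i, αstar i * xstar i = 0)) := by
  subst hT₀ hS hlam
  obtain rfl : F = congestionCost c₀ γ := funext hF
  obtain rfl : xstar = allocation c₀ d γ T := funext hxstar
  obtain rfl : αstar = allocationMultiplier c₀ d γ T := funext hα
  have hcard : (#T : ℝ) ≠ 0 := by exact_mod_cast hT.card_pos.ne'
  have hlam : allocationLevel c₀ d γ T + 2 * c₀ * d
      = 2 * c₀ * d * ((#T : ℝ) + 1) / #T + (∑ t ∈ T, γ t) / #T := by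
    rw [allocationLevel]
    field_simp
    ring
  have hkkt := hlam ▸ kktConditions_allocation hc₀.ne' hT hb
  have hsum : ∑ i, allocation c₀ d γ T i = d := sum_allocation hc₀.ne' hT
  refine ⟨⟨⟨hsum, fun i => ?_⟩, fun x hx hx₀ hne => ?_⟩, hkkt⟩
  · rw [allocation]
    split_ifs with hi
    exacts [ha i hi, le_rfl]
  · exact congestionCost_lt_of_kktConditions hc₀ hkkt (hx.trans hsum.symm) hx₀ hne

/-- Explicit solution and KKT certificate for the single-demand commodity allocation
problem with linear congestion cost. -/
theorem stmt18 (N : ℕ) (hN : 1 ≤ N) (c₀ d : ℝ) (hc₀ : 0 < c₀) (hd : 0 < d)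
    (γ : Fin N → ℝ)
    (F : (Fin N → ℝ) → ℝ)
    (hF : ∀ x, F x = ∑ i, (c₀ * ((x i) ^ 2 + x i * ∑ s, x s) + γ i * x i))
    (T : Finset (Fin N)) (hT : T.Nonempty)
    (T₀ : ℕ) (hT₀ : T₀ = T.card) (S : ℝ) (hS : S = ∑ t ∈ T, γ t)
    (ha : ∀ i ∈ T, 0 ≤ d / (T₀ : ℝ) + (1 / (2 * c₀)) * (S / (T₀ : ℝ) - γ i))
    (hb : ∀ i ∉ T, (2 * c₀ * d + S) / (T₀ : ℝ) ≤ γ i)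
    (xstar : Fin N → ℝ)
    (hxstar : ∀ i, xstar i =
      if i ∈ T then d / (T₀ : ℝ) + (1 / (2 * c₀)) * (S / (T₀ : ℝ) - γ i) else 0)
    (lamstar : ℝ) (hlam : lamstar = 2 * c₀ * d * ((T₀ : ℝ) + 1) / (T₀ : ℝ) + S / (T₀ : ℝ))
    (αstar : Fin N → ℝ)
    (hα : ∀ i, αstar i = if i ∈ T then 0 else γ i - (2 * c₀ * d + S) / (T₀ : ℝ)) :
    -- x* is feasible and is the unique global minimizer of F over the feasible set
    ((∑ i, xstar i = d ∧ ∀ i, 0 ≤ xstar i) ∧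
      (∀ x : Fin N → ℝ, (∑ i, x i = d) → (∀ i, 0 ≤ x i) → x ≠ xstar → F xstar < F x)) ∧
    -- the KKT conditions hold at x* with multipliers λ* and α*
    ((∀ i, 2 * c₀ * xstar i + 2 * c₀ * (∑ s, xstar s) + γ i - lamstar - αstar i = 0) ∧
      (∀ i, 0 ≤ αstar i) ∧ (∀ i, αstar i * xstar i = 0)) :=
  stmt18_general N c₀ d hc₀ γ F hF T hT T₀ hT₀ S hS ha hb xstar hxstar lamstar hlam αstar hα
end
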